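/- Consider the adaptive gradient flow for the exponential-loss empirical risk with the separability assumption, and define the surrogate norm ρ(t) = ‖β(t)^{−1/2} ⊙ v(t)‖ and the surrogate margin γ̃(t) = log(1/L̃(v(t))) / ρ(t)^L. Then γ̃(t) converges to a strictly positive real limit as t → ∞. -/

import Mathlib

/-!
Write `a = -log L̃(v)` and `r = ρ² = ∑ⱼ vⱼ²/βⱼ`, so that `log γ̃ = log a - (L/2) log r`. Along the
flow `L̃(v)` decreases at rate `P = ∑ⱼ βⱼ (∂ⱼL̃)²`, hence `a' = P/L̃`. Euler's identity for the
`L`-homogeneous `qᵢ` gives `-⟪∇L̃(v), v⟫ ≥ L a L̃`, and Cauchy–Schwarz gives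
`⟪∇L̃(v), v⟫² ≤ r P`; together they yield `(log γ̃)' ≥ -(L/2) ∑ⱼ |βⱼ'/βⱼ|`. The right side is
integrable, so `log γ̃` plus the integral of `(L/2) ∑ⱼ |βⱼ'/βⱼ|` is nondecreasing. Homogeneity also
gives `a ≤ M ‖v‖^L`, and `βⱼ → 1` gives `‖v‖² ≤ 2r` eventually, so `log γ̃` is bounded above and
therefore converges.
-/

open MeasureTheory Filter Set Real Topology Finset

section Homogeneous

variable {E : Type*} [NormedAddCommGroup E] [NormedSpace ℝ E] {f : E → ℝ} {L : ℝ}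

theorem HasFDerivAt.apply_self_of_rpow_homogeneous {f' : E →L[ℝ] ℝ} {x : E}
    (hhom : ∀ α : ℝ, 0 < α → ∀ y, f (α • y) = α ^ L * f y) (hf : HasFDerivAt f f' x) :
    f' x = L * f x := by
  have h₁ : HasDerivAt (fun α : ℝ => f (α • x)) (f' x) 1 := by
    have := hf.comp_hasDerivAt_of_eq 1 ((hasDerivAt_id (1 : ℝ)).smul_const x) (one_smul ℝ x).symm
    rwa [one_smul] at this
  have h₂ : HasDerivAt (fun α : ℝ => α ^ L * f x) (L * f x) 1 := by
    simpa using (hasDerivAt_rpow_const (x := 1) (p := L) (Or.inl one_ne_zero)).mul_const (f x)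
  have heq : (fun α : ℝ => f (α • x)) =ᶠ[𝓝 1] fun α => α ^ L * f x :=
    (eventually_gt_nhds one_pos).mono fun α hα => hhom α hα x
  exact (heq.hasDerivAt_iff.mp h₁).unique h₂

theorem map_zero_of_rpow_homogeneous (hL : L ≠ 0)
    (hhom : ∀ α : ℝ, 0 < α → ∀ y, f (α • y) = α ^ L * f y) : f 0 = 0 := by
  have h := hhom 2 two_pos 0
  rw [smul_zero] at h
  have h2 : (2 : ℝ) ^ L ≠ 1 := fun h2 => by
    have := Real.log_rpow two_pos L
    rw [h2, log_one] at this
    exact (mul_eq_zero.1 this.symm).elim hL (log_pos one_lt_two).ne'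
  exact (mul_eq_zero.1 (by linarith : ((2 : ℝ) ^ L - 1) * f 0 = 0)).resolve_left
    (sub_ne_zero.2 h2)

theorem exists_le_mul_norm_rpow_of_rpow_homogeneous [ProperSpace E] (hf : Continuous f)
    (hhom : ∀ α : ℝ, 0 < α → ∀ y, f (α • y) = α ^ L * f y) :
    ∃ M, ∀ x ≠ 0, f x ≤ M * ‖x‖ ^ L := by
  obtain ⟨M, hM⟩ := (isCompact_sphere (0 : E) 1).bddAbove_image hf.continuousOn
  refine ⟨M, fun x hx => ?_⟩
  have hx' : 0 < ‖x‖ := norm_pos_iff.2 hx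
  have hu : ‖x‖⁻¹ • x ∈ Metric.sphere (0 : E) 1 := by simp [norm_smul, hx'.ne']
  calc f x = f (‖x‖ • ‖x‖⁻¹ • x) := by rw [smul_smul, mul_inv_cancel₀ hx'.ne', one_smul]
    _ = ‖x‖ ^ L * f (‖x‖⁻¹ • x) := hhom _ hx' _
    _ ≤ ‖x‖ ^ L * M := by gcongr; exact hM ⟨_, hu, rfl⟩
    _ = M * ‖x‖ ^ L := mul_comm _ _

end Homogeneous

section ExpLoss

variable {κ E : Type*} [Fintype κ]

noncomputable def expLoss (q : κ → E → ℝ) (x : E) : ℝ := ∑ i, exp (-q i x)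

variable {q : κ → E → ℝ} {L : ℝ}

theorem expLoss_pos [Nonempty κ] (x : E) : 0 < expLoss q x :=
  sum_pos (fun _ _ => exp_pos _) univ_nonempty

theorem neg_log_expLoss_le (i : κ) (x : E) : -log (expLoss q x) ≤ q i x := by
  have h : exp (-q i x) ≤ expLoss q x :=
    single_le_sum (f := fun i => exp (-q i x)) (fun j _ => (exp_pos _).le) (mem_univ i)
  have := log_le_log (exp_pos _) h
  rw [log_exp] at this
  linarith

theorem one_le_expLoss_zero [Zero E] [Nonempty κ] (hq : ∀ i, q i 0 = 0) :
    1 ≤ expLoss q 0 := by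
  simp only [expLoss, hq, neg_zero, exp_zero, sum_const, card_univ, nsmul_eq_mul, mul_one]
  exact_mod_cast Fintype.card_pos

theorem hasFDerivAt_expLoss [NormedAddCommGroup E] [NormedSpace ℝ E] {q' : κ → E →L[ℝ] ℝ} {x : E}
    (hq : ∀ i, HasFDerivAt (q i) (q' i) x) :
    HasFDerivAt (expLoss q) (∑ i, exp (-q i x) • -q' i) x :=
  HasFDerivAt.fun_sum fun i _ => (hq i).neg.exp

theorem differentiable_expLoss [NormedAddCommGroup E] [NormedSpace ℝ E]
    (hq : ∀ i, Differentiable ℝ (q i)) : Differentiable ℝ (expLoss q) := fun x =>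
  (hasFDerivAt_expLoss fun i => (hq i x).hasFDerivAt).differentiableAt

theorem mul_neg_log_expLoss_mul_le [NormedAddCommGroup E] [NormedSpace ℝ E] (hL : 0 ≤ L)
    (hhom : ∀ i, ∀ α : ℝ, 0 < α → ∀ y, q i (α • y) = α ^ L * q i y) {x : E}
    (hq : ∀ i, DifferentiableAt ℝ (q i) x) :
    L * -log (expLoss q x) * expLoss q x ≤ -fderiv ℝ (expLoss q) x x := by
  have hEuler i := (hq i).hasFDerivAt.apply_self_of_rpow_homogeneous (hhom i)
  calc L * -log (expLoss q x) * expLoss q x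
      = ∑ i, L * -log (expLoss q x) * exp (-q i x) := mul_sum _ _ _
    _ ≤ ∑ i, L * q i x * exp (-q i x) := by
      gcongr with i; exact neg_log_expLoss_le i x
    _ = -fderiv ℝ (expLoss q) x x := by
      rw [(hasFDerivAt_expLoss fun i => (hq i).hasFDerivAt).fderiv]
      simp [hEuler, ← sum_neg_distrib, mul_comm]

end ExpLoss

theorem MonotoneOn.exists_tendsto_atTop_of_eventually_le {f : ℝ → ℝ} {a C : ℝ}
    (hf : MonotoneOn f (Ioi a)) (hC : ∀ᶠ x in atTop, f x ≤ C) :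
    ∃ c, Tendsto f atTop (𝓝 c) := by
  obtain ⟨b, hb⟩ := eventually_atTop.1 hC
  set m := max (a + 1) b
  have hm : ∀ x, max x m ∈ Ioi a := fun x =>
    (lt_add_one a).trans_le ((le_max_left _ _).trans (le_max_right _ _))
  have hmono : Monotone fun x => f (max x m) := fun x y hxy =>
    hf (hm x) (hm y) (max_le_max_right m hxy)
  have hbdd : BddAbove (range fun x => f (max x m)) := by
    refine ⟨C, ?_⟩
    rintro _ ⟨x, rfl⟩
    exact hb _ ((le_max_right _ _).trans (le_max_right _ _))
  refine ⟨_, (tendsto_atTop_ciSup hmono hbdd).congr' ?_⟩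
  filter_upwards [eventually_ge_atTop m] with x hx
  rw [max_eq_left hx]

theorem exists_tendsto_of_hasDerivAt_ge_neg_integrable {g e : ℝ → ℝ} {a C : ℝ}
    (hg : ∀ t ∈ Ioi a, ∃ d, HasDerivAt g d t ∧ -e t ≤ d)
    (he : ContinuousOn e (Ioi a)) (he_int : IntegrableOn e (Ioi a))
    (hC : ∀ᶠ t in atTop, g t ≤ C) : ∃ c, Tendsto g atTop (𝓝 c) := by
  set I := fun t => ∫ s in a..t, e s
  have hI : ∀ t ∈ Ioi a, HasDerivAt I (e t) t := fun t ht =>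
    intervalIntegral.integral_hasDerivAt_right
      ((intervalIntegrable_iff_integrableOn_Ioc_of_le (le_of_lt ht)).2
        (he_int.mono_set Ioc_subset_Ioi_self))
      (he.stronglyMeasurableAtFilter isOpen_Ioi t ht) (he.continuousAt (Ioi_mem_nhds ht))
  have hI_lim : Tendsto I atTop (𝓝 (∫ s in Ioi a, e s)) :=
    intervalIntegral_tendsto_integral_Ioi a he_int tendsto_id
  have hgI : ∀ t ∈ Ioi a, ∃ d, HasDerivAt (fun t => g t + I t) d t ∧ 0 ≤ d := fun t ht => by
    obtain ⟨d, hd, hde⟩ := hg t ht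
    exact ⟨d + e t, hd.add (hI t ht), by linarith⟩
  have hmono : MonotoneOn (fun t => g t + I t) (Ioi a) := by
    refine monotoneOn_of_deriv_nonneg (convex_Ioi a)
      (fun t ht => (hgI t ht).choose_spec.1.continuousAt.continuousWithinAt)
      (fun t ht => ?_) (fun t ht => ?_) <;> obtain ⟨d, hd, hd0⟩ := hgI t (interior_subset ht)
    · exact hd.differentiableAt.differentiableWithinAt
    · rwa [hd.deriv]
  obtain ⟨c, hc⟩ := hmono.exists_tendsto_atTop_of_eventually_le (C := C + ((∫ s in Ioi a, e s) + 1))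
    (by
      filter_upwards [hC, hI_lim.eventually (eventually_le_nhds (lt_add_one _))] with t h1 h2
      linarith)
  exact ⟨c - ∫ s in Ioi a, e s, by simpa using hc.sub hI_lim⟩

section PreconditionedNorm

variable {ι : Type*} [Fintype ι]

noncomputable def precondNormSq (b : ι → ℝ) (x : EuclideanSpace ℝ ι) : ℝ := ∑ j, x j ^ 2 / b j

variable {b : ι → ℝ} {f : EuclideanSpace ℝ ι → ℝ}

theorem precondNormSq_pos (hb : ∀ j, 0 < b j) {x : EuclideanSpace ℝ ι} (hx : x ≠ 0) :
    0 < precondNormSq b x := by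
  obtain ⟨j, hj⟩ : ∃ j, x j ≠ 0 := by
    by_contra! h
    exact hx (by ext j; exact h j)
  exact sum_pos' (fun k _ => div_nonneg (sq_nonneg _) (hb k).le)
    ⟨j, mem_univ j, div_pos (by positivity) (hb j)⟩

theorem norm_sq_le_mul_precondNormSq (hb : ∀ j, 0 < b j) {B : ℝ} (hbB : ∀ j, b j ≤ B)
    (x : EuclideanSpace ℝ ι) : ‖x‖ ^ 2 ≤ B * precondNormSq b x := by
  rw [EuclideanSpace.norm_sq_eq, precondNormSq, mul_sum]
  gcongr with j
  rw [Real.norm_eq_abs, sq_abs, mul_div_assoc', le_div_iff₀ (hb j)]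
  nlinarith [sq_nonneg (x j), hbB j]

theorem sum_rpow_neg_half_mul_sq (hb : ∀ j, 0 < b j) (x : EuclideanSpace ℝ ι) :
    ∑ j, (b j ^ (-(1 / 2) : ℝ) * x j) ^ 2 = precondNormSq b x := by
  refine sum_congr rfl fun j _ => ?_
  rw [mul_pow, ← rpow_natCast, ← rpow_mul (hb j).le]
  norm_num
  rw [rpow_neg_one, div_eq_mul_inv, mul_comm]

theorem sq_sum_mul_le_precondNormSq_mul (hb : ∀ j, 0 < b j) (x : EuclideanSpace ℝ ι)
    (d : ι → ℝ) : (∑ j, x j * d j) ^ 2 ≤ precondNormSq b x * ∑ j, b j * d j ^ 2 :=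
  sum_sq_le_sum_mul_sum_of_sq_le_mul _ (fun j _ => div_nonneg (sq_nonneg _) (hb j).le)
    (fun j _ => mul_nonneg (hb j).le (sq_nonneg _)) fun j _ => by
      rw [div_mul_eq_mul_div, mul_div_assoc, mul_comm (b j), mul_div_assoc,
        div_self (hb j).ne', mul_one, mul_pow]

theorem abs_sum_sq_mul_div_sq_le (hb : ∀ j, 0 < b j) (b' : ι → ℝ) (x : EuclideanSpace ℝ ι) :
    |∑ j, x j ^ 2 * b' j / b j ^ 2| ≤ (∑ j, |b' j / b j|) * precondNormSq b x := by
  calc |∑ j, x j ^ 2 * b' j / b j ^ 2| ≤ ∑ j, |x j ^ 2 * b' j / b j ^ 2| := abs_sum_le_sum_abs _ _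
    _ = ∑ j, |b' j / b j| * (x j ^ 2 / b j) := sum_congr rfl fun j _ => by
      rw [abs_div, abs_mul, abs_div, abs_of_nonneg (sq_nonneg (x j)), abs_of_pos (hb j),
        abs_of_pos (pow_pos (hb j) 2)]
      field_simp
    _ ≤ ∑ j, (∑ k, |b' k / b k|) * (x j ^ 2 / b j) := by
      gcongr with j
      · exact div_nonneg (sq_nonneg _) (hb j).le
      · exact single_le_sum (f := fun k => |b' k / b k|) (fun k _ => abs_nonneg _) (mem_univ j)
    _ = _ := (mul_sum _ _ _).symm

noncomputable def logMargin (f : EuclideanSpace ℝ ι → ℝ) (L : ℝ) (b : ι → ℝ)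
    (x : EuclideanSpace ℝ ι) : ℝ :=
  log (-log (f x)) - L / 2 * log (precondNormSq b x)

theorem exp_logMargin {L : ℝ} {x : EuclideanSpace ℝ ι} (ha : 0 < -log (f x))
    (hr : 0 < precondNormSq b x) :
    exp (logMargin f L b x) = log (1 / f x) / sqrt (precondNormSq b x) ^ L := by
  rw [logMargin, exp_sub, exp_log ha, one_div, log_inv, sqrt_eq_rpow, ← rpow_mul hr.le,
    rpow_def_of_pos hr]
  ring_nf

theorem logMargin_le {L M B : ℝ} {x : EuclideanSpace ℝ ι} (hL : 0 ≤ L) (hb : ∀ j, 0 < b j)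
    (hbB : ∀ j, b j ≤ B) (hx : x ≠ 0) (ha : 0 < -log (f x)) (hM : -log (f x) ≤ M * ‖x‖ ^ L) :
    logMargin f L b x ≤ log M + L / 2 * log B := by
  have hx' : 0 < ‖x‖ := norm_pos_iff.2 hx
  have hr := precondNormSq_pos hb hx
  have hxr := norm_sq_le_mul_precondNormSq hb hbB x
  have hM0 : 0 < M := pos_of_mul_pos_left (ha.trans_le hM) (by positivity)
  have hB0 : 0 < B := pos_of_mul_pos_left ((by positivity : 0 < ‖x‖ ^ 2).trans_le hxr) hr.le
  have h₁ : log (-log (f x)) ≤ log M + L * log ‖x‖ := by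
    calc _ ≤ log (M * ‖x‖ ^ L) := log_le_log ha hM
      _ = _ := by rw [log_mul hM0.ne' (by positivity), log_rpow hx']
  have h₂ : 2 * log ‖x‖ ≤ log B + log (precondNormSq b x) := by
    calc 2 * log ‖x‖ = log (‖x‖ ^ 2) := by rw [log_pow]; norm_num
      _ ≤ log (B * precondNormSq b x) := log_le_log (by positivity) hxr
      _ = _ := log_mul hB0.ne' hr.ne'
  rw [logMargin]
  nlinarith [mul_le_mul_of_nonneg_left h₂ (by positivity : (0 : ℝ) ≤ L / 2)]

end PreconditionedNorm

section PreconditionedFlow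

variable {ι : Type*} [Fintype ι] {f : EuclideanSpace ℝ ι → ℝ} {v : ℝ → EuclideanSpace ℝ ι}
  {b : ι → ℝ} {β : ℝ → ι → ℝ} {s : Set ℝ} {t : ℝ}

theorem hasDerivWithinAt_piLp {w : EuclideanSpace ℝ ι} :
    HasDerivWithinAt v w s t ↔ ∀ j, HasDerivWithinAt (fun u => v u j) (w j) s t := by
  rw [hasDerivWithinAt_iff_hasFDerivWithinAt, hasFDerivWithinAt_piLp]
  rfl

theorem hasDerivWithinAt_precondNormSq {w b' : ι → ℝ}
    (hv : ∀ j, HasDerivWithinAt (fun u => v u j) (w j) s t)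
    (hβ : ∀ j, HasDerivWithinAt (fun u => β u j) (b' j) s t) (hβ0 : ∀ j, β t j ≠ 0) :
    HasDerivWithinAt (fun u => precondNormSq (β u) (v u))
      (∑ j, (2 * v t j * w j / β t j - v t j ^ 2 * b' j / β t j ^ 2)) s t :=
  HasDerivWithinAt.fun_sum fun j _ => (((hv j).fun_pow 2).div (hβ j) (hβ0 j)).congr_deriv (by
    field_simp
    ring)

theorem continuousOn_sum_abs_div_of_hasDerivWithinAt {β' : ℝ → ι → ℝ}
    (hβ : ∀ j, ∀ t ∈ s, HasDerivWithinAt (fun u => β u j) (β' t j) s t)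
    (hβ' : ∀ j, ContinuousOn (fun t => β' t j) s) (hβ0 : ∀ t ∈ s, ∀ j, β t j ≠ 0) :
    ContinuousOn (fun t => ∑ j, |β' t j / β t j|) s :=
  continuousOn_finsetSum _ fun j _ => ((hβ' j).div (fun t ht => (hβ j t ht).continuousWithinAt)
    fun t ht => hβ0 t ht j).abs

variable [DecidableEq ι]

theorem ContinuousLinearMap.apply_eq_sum_mul_single (T : EuclideanSpace ℝ ι →L[ℝ] ℝ)
    (y : EuclideanSpace ℝ ι) : T y = ∑ j, y j * T (EuclideanSpace.single j 1) := by
  conv_lhs => rw [← (EuclideanSpace.basisFun ι ℝ).sum_repr y, map_sum]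
  simp [smul_eq_mul]

theorem hasDerivWithinAt_comp_precondFlow (hf : DifferentiableAt ℝ f (v t))
    (hv : ∀ j, HasDerivWithinAt (fun u => v u j)
      (-b j * fderiv ℝ f (v t) (EuclideanSpace.single j 1)) s t) :
    HasDerivWithinAt (fun u => f (v u))
      (-∑ j, b j * fderiv ℝ f (v t) (EuclideanSpace.single j 1) ^ 2) s t := by
  have := hf.hasFDerivAt.comp_hasDerivWithinAt t ((hasDerivWithinAt_piLp
    (w := WithLp.toLp 2 fun j => -b j * fderiv ℝ f (v t) (EuclideanSpace.single j 1))).2 hv)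
  refine this.congr_deriv ?_
  rw [ContinuousLinearMap.apply_eq_sum_mul_single, ← sum_neg_distrib]
  exact sum_congr rfl fun j _ => by ring

theorem antitoneOn_comp_precondFlow (hs : Convex ℝ s) (hf : Differentiable ℝ f)
    (hβ : ∀ t ∈ s, ∀ j, 0 ≤ β t j)
    (hv : ∀ j, ∀ t ∈ s, HasDerivWithinAt (fun u => v u j)
      (-β t j * fderiv ℝ f (v t) (EuclideanSpace.single j 1)) s t) :
    AntitoneOn (fun t => f (v t)) s := by
  have hd t (ht : t ∈ s) := hasDerivWithinAt_comp_precondFlow (hf (v t)) fun j => hv j t ht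
  refine antitoneOn_of_hasDerivWithinAt_nonpos hs (fun t ht => (hd t ht).continuousWithinAt)
    (fun t ht => (hd t (interior_subset ht)).mono interior_subset) fun t ht => ?_
  exact neg_nonpos.2 (sum_nonneg fun j _ => mul_nonneg (hβ t (interior_subset ht) j) (sq_nonneg _))

theorem neg_mul_le_log_margin_deriv {L φ a r P K S e : ℝ} (hL : 0 ≤ L) (hφ : 0 < φ)
    (ha : 0 < a) (hr : 0 < r) (hK : L * a * φ ≤ K) (hKP : K ^ 2 ≤ r * P) (hS : |S| ≤ e * r) :
    -(L / 2 * e) ≤ P / φ / a - L / 2 * ((2 * K - S) / r) := by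
  have hK0 : 0 ≤ K := le_trans (by positivity) hK
  have h₁ : L * K / r ≤ P / φ / a := by
    rw [div_div, div_le_div_iff₀ hr (by positivity)]
    calc L * K * (φ * a) = K * (L * a * φ) := by ring
      _ ≤ K * K := mul_le_mul_of_nonneg_left hK hK0
      _ ≤ P * r := by nlinarith
  have h₂ : (2 * K - S) / r ≤ 2 * K / r + e := by
    rw [div_add' _ _ _ hr.ne', div_le_div_iff_of_pos_right hr]
    linarith [neg_abs_le S]
  have h₃ : L / 2 * (2 * K / r + e) = L * K / r + L / 2 * e := by ring
  nlinarith [mul_le_mul_of_nonneg_left h₂ (by positivity : (0 : ℝ) ≤ L / 2)]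

theorem exists_hasDerivWithinAt_logMargin_ge {L : ℝ} {b' : ι → ℝ} (hL : 0 ≤ L)
    (hf : DifferentiableAt ℝ f (v t)) (hf0 : 0 < f (v t)) (hf1 : f (v t) < 1)
    (hmargin : L * -log (f (v t)) * f (v t) ≤ -fderiv ℝ f (v t) (v t)) (hx : v t ≠ 0)
    (hβ0 : ∀ j, 0 < β t j) (hβ : ∀ j, HasDerivWithinAt (fun u => β u j) (b' j) s t)
    (hv : ∀ j, HasDerivWithinAt (fun u => v u j)
      (-β t j * fderiv ℝ f (v t) (EuclideanSpace.single j 1)) s t) :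
    ∃ d, HasDerivWithinAt (fun u => logMargin f L (β u) (v u)) d s t ∧
      -(L / 2 * ∑ j, |b' j / β t j|) ≤ d := by
  set D := fderiv ℝ f (v t)
  have ha : 0 < -log (f (v t)) := neg_pos.2 (log_neg hf0 hf1)
  have hr : 0 < precondNormSq (β t) (v t) := precondNormSq_pos hβ0 hx
  have hφ' := hasDerivWithinAt_comp_precondFlow hf hv
  have hr' : HasDerivWithinAt (fun u => precondNormSq (β u) (v u))
      (2 * -D (v t) - ∑ j, v t j ^ 2 * b' j / β t j ^ 2) s t := by
    refine (hasDerivWithinAt_precondNormSq hv hβ fun j => (hβ0 j).ne').congr_deriv ?_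
    rw [D.apply_eq_sum_mul_single, mul_neg, mul_sum, ← sum_neg_distrib, ← sum_sub_distrib]
    refine sum_congr rfl fun j _ => ?_
    field_simp [(hβ0 j).ne']
  have hCS : (-D (v t)) ^ 2 ≤ precondNormSq (β t) (v t) *
      ∑ j, β t j * D (EuclideanSpace.single j 1) ^ 2 := by
    rw [neg_sq, D.apply_eq_sum_mul_single]
    exact sq_sum_mul_le_precondNormSq_mul hβ0 _ _
  refine ⟨_, ((hφ'.log hf0.ne').neg.log ha.ne').sub ((hr'.log hr.ne').const_mul (L / 2)), ?_⟩
  refine (neg_mul_le_log_margin_deriv hL hf0 ha hr hmargin hCS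
    (abs_sum_sq_mul_div_sq_le hβ0 b' (v t))).trans_eq ?_
  simp only [Pi.neg_apply, neg_div, neg_neg, D]

theorem exists_tendsto_margin_of_precondFlow {L M : ℝ} {β' : ℝ → ι → ℝ} {t₀ : ℝ} (hL : 0 ≤ L)
    (hf : Differentiable ℝ f) (hf0 : ∀ x, 0 < f x) (hf_zero : 1 ≤ f 0)
    (hmargin : ∀ x, L * -log (f x) * f x ≤ -fderiv ℝ f x x)
    (hgrowth : ∀ x ≠ 0, -log (f x) ≤ M * ‖x‖ ^ L)
    (hβpos : ∀ t ∈ Ici (0 : ℝ), ∀ j, 0 < β t j)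
    (hβderiv : ∀ j, ∀ t ∈ Ici (0 : ℝ), HasDerivWithinAt (fun s => β s j) (β' t j) (Ici 0) t)
    (hβ'cont : ∀ j, ContinuousOn (fun t => β' t j) (Ici 0))
    (hβlim : ∀ j, Tendsto (fun t => β t j) atTop (𝓝 1))
    (hβint : ∀ j, IntegrableOn (fun t => |β' t j / β t j|) (Ici 0))
    (hflow : ∀ j, ∀ t ∈ Ici (0 : ℝ), HasDerivWithinAt (fun s => v s j)
      (-β t j * fderiv ℝ f (v t) (EuclideanSpace.single j 1)) (Ici 0) t)
    (ht₀ : 0 ≤ t₀) (hsep : f (v t₀) < 1) :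
    ∃ c, 0 < c ∧ Tendsto (fun t => log (1 / f (v t)) / sqrt (precondNormSq (β t) (v t)) ^ L)
      atTop (𝓝 c) := by
  have hsub : Ici t₀ ⊆ Ici 0 := Ici_subset_Ici.2 ht₀
  have hloss t (ht : t ∈ Ici t₀) : f (v t) < 1 :=
    (antitoneOn_comp_precondFlow (convex_Ici 0) hf (fun t ht j => (hβpos t ht j).le) hflow
      (hsub self_mem_Ici) (hsub ht) ht).trans_lt hsep
  have hv t (ht : t ∈ Ici t₀) : v t ≠ 0 := fun h0 => by
    linarith [hloss t ht, h0 ▸ hf_zero]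
  have ha t (ht : t ∈ Ici t₀) : 0 < -log (f (v t)) := neg_pos.2 (log_neg (hf0 _) (hloss t ht))
  have hderiv : ∀ t ∈ Ioi t₀, ∃ d, HasDerivAt (fun u => logMargin f L (β u) (v u)) d t ∧
      -(L / 2 * ∑ j, |β' t j / β t j|) ≤ d := by
    intro t ht
    have ht' : t ∈ Ici t₀ := Ioi_subset_Ici_self ht
    obtain ⟨d, hd, hle⟩ := exists_hasDerivWithinAt_logMargin_ge hL (hf _) (hf0 _) (hloss t ht')
      (hmargin _) (hv t ht') (hβpos t (hsub ht')) (fun j => hβderiv j t (hsub ht'))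
      fun j => hflow j t (hsub ht')
    exact ⟨d, hd.hasDerivAt (Ici_mem_nhds (ht₀.trans_lt ht)), hle⟩
  have hIoi : Ioi t₀ ⊆ Ici 0 := Ioi_subset_Ici_self.trans hsub
  have he : ContinuousOn (fun t => L / 2 * ∑ j, |β' t j / β t j|) (Ioi t₀) :=
    (continuousOn_const.mul (continuousOn_sum_abs_div_of_hasDerivWithinAt hβderiv hβ'cont
      fun t ht j => (hβpos t ht j).ne')).mono hIoi
  have he_int : IntegrableOn (fun t => L / 2 * ∑ j, |β' t j / β t j|) (Ioi t₀) := .mono_set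
    ((integrable_finsetSum _ fun j _ => hβint j).const_mul (L / 2)) hIoi
  have hbdd : ∀ᶠ t in atTop, logMargin f L (β t) (v t) ≤ log M + L / 2 * log 2 := by
    filter_upwards [eventually_ge_atTop t₀, eventually_all.2 fun j =>
      (hβlim j).eventually (eventually_le_nhds one_lt_two)] with t ht hβ2
    exact logMargin_le hL (hβpos t (hsub ht)) hβ2 (hv t ht) (ha t ht) (hgrowth _ (hv t ht))
  obtain ⟨c, hc⟩ := exists_tendsto_of_hasDerivAt_ge_neg_integrable hderiv he he_int hbdd
  refine ⟨exp c, exp_pos c, ((continuous_exp.tendsto c).comp hc).congr' ?_⟩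
  filter_upwards [eventually_ge_atTop t₀] with t ht
  exact exp_logMargin (ha t ht) (precondNormSq_pos (hβpos t (hsub ht)) (hv t ht))

end PreconditionedFlow

theorem surrogate_margin_converges_general (p N : ℕ) (hN : 1 ≤ N)
    (L : ℝ) (hL : 0 < L)
    (q : Fin N → EuclideanSpace ℝ (Fin p) → ℝ)
    (hq : ∀ i, ContDiff ℝ 1 (q i))
    (hhom : ∀ i, ∀ α : ℝ, 0 < α → ∀ v, q i (α • v) = α ^ L * q i v)
    (Ltil : EuclideanSpace ℝ (Fin p) → ℝ)
    (hLtil : ∀ x, Ltil x = ∑ i, Real.exp (-(q i x)))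
    (v : ℝ → EuclideanSpace ℝ (Fin p))
    (β β' : ℝ → Fin p → ℝ)
    (hβpos : ∀ t ∈ Set.Ici (0:ℝ), ∀ j, 0 < β t j)
    (hβderiv : ∀ j, ∀ t ∈ Set.Ici (0:ℝ),
      HasDerivWithinAt (fun s => β s j) (β' t j) (Set.Ici 0) t)
    (hβ'cont : ∀ j, ContinuousOn (fun t => β' t j) (Set.Ici 0))
    (hβlim : ∀ j, Tendsto (fun t => β t j) atTop (nhds 1))
    (hβint : ∀ j, IntegrableOn (fun t => |β' t j / β t j|) (Set.Ici 0))
    (hflow : ∀ j, ∀ t ∈ Set.Ici (0:ℝ),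
      HasDerivWithinAt (fun s => v s j)
        (-(β t j) * fderiv ℝ Ltil (v t) (EuclideanSpace.single j 1)) (Set.Ici 0) t)
    (t₀ : ℝ) (ht₀ : 0 ≤ t₀) (hsep : Ltil (v t₀) < 1)
    (ρ γ : ℝ → ℝ)
    (hρ : ∀ t, ρ t = Real.sqrt (∑ j, ((β t j) ^ (-(1/2) : ℝ) * v t j) ^ 2))
    (hγ : ∀ t, γ t = Real.log (1 / Ltil (v t)) / (ρ t) ^ L) :
    ∃ c : ℝ, 0 < c ∧ Tendsto γ atTop (nhds c) := by
  obtain rfl : Ltil = expLoss q := funext hLtil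
  have : Nonempty (Fin N) := ⟨⟨0, hN⟩⟩
  have hqd i : Differentiable ℝ (q i) := (hq i).differentiable one_ne_zero
  obtain ⟨M, hM⟩ :=
    exists_le_mul_norm_rpow_of_rpow_homogeneous (hq ⟨0, hN⟩).continuous (hhom ⟨0, hN⟩)
  obtain ⟨c, hc, hlim⟩ := exists_tendsto_margin_of_precondFlow hL.le (differentiable_expLoss hqd)
    expLoss_pos (one_le_expLoss_zero fun i => map_zero_of_rpow_homogeneous hL.ne' (hhom i))
    (fun x => mul_neg_log_expLoss_mul_le hL.le hhom fun i => hqd i x)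
    (fun x hx => (neg_log_expLoss_le _ x).trans (hM x hx))
    hβpos hβderiv hβ'cont hβlim hβint hflow ht₀ hsep
  refine ⟨c, hc, hlim.congr' ?_⟩
  filter_upwards [eventually_ge_atTop 0] with t ht
  rw [hγ, hρ, sum_rpow_neg_half_mul_sq (hβpos t ht)]

/-- Along an adaptive gradient flow for the exponential-loss empirical risk of
`L`-homogeneous `C¹` functions with the separability assumption, the surrogate margin
`γ̃(t) = log(1/L̃(v t)) / ρ(t)^L` (with `ρ(t) = ‖β(t)^{-1/2} ⊙ v(t)‖`) converges to a
strictly positive limit as `t → ∞`. -/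
theorem surrogate_margin_converges (p N : ℕ) (hp : 1 ≤ p) (hN : 1 ≤ N)
    (L : ℝ) (hL : 0 < L)
    (q : Fin N → EuclideanSpace ℝ (Fin p) → ℝ)
    (hq : ∀ i, ContDiff ℝ 1 (q i))
    (hhom : ∀ i, ∀ α : ℝ, 0 < α → ∀ v, q i (α • v) = α ^ L * q i v)
    (Ltil : EuclideanSpace ℝ (Fin p) → ℝ)
    (hLtil : ∀ x, Ltil x = ∑ i, Real.exp (-(q i x)))
    (v : ℝ → EuclideanSpace ℝ (Fin p))
    (β β' : ℝ → Fin p → ℝ)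
    (hβpos : ∀ t ∈ Set.Ici (0:ℝ), ∀ j, 0 < β t j)
    (hβderiv : ∀ j, ∀ t ∈ Set.Ici (0:ℝ),
      HasDerivWithinAt (fun s => β s j) (β' t j) (Set.Ici 0) t)
    (hβ'cont : ∀ j, ContinuousOn (fun t => β' t j) (Set.Ici 0))
    (hβlim : ∀ j, Tendsto (fun t => β t j) atTop (nhds 1))
    (hβint : ∀ j, IntegrableOn (fun t => |β' t j / β t j|) (Set.Ici 0))
    (hflow : ∀ j, ∀ t ∈ Set.Ici (0:ℝ),
      HasDerivWithinAt (fun s => v s j)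
        (-(β t j) * fderiv ℝ Ltil (v t) (EuclideanSpace.single j 1)) (Set.Ici 0) t)
    (t₀ : ℝ) (ht₀ : 0 ≤ t₀) (hsep : Ltil (v t₀) < 1)
    (ρ γ : ℝ → ℝ)
    (hρ : ∀ t, ρ t = Real.sqrt (∑ j, ((β t j) ^ (-(1/2) : ℝ) * v t j) ^ 2))
    (hγ : ∀ t, γ t = Real.log (1 / Ltil (v t)) / (ρ t) ^ L) :
    ∃ c : ℝ, 0 < c ∧ Tendsto γ atTop (nhds c) :=
  surrogate_margin_converges_general p N hN L hL q hq hhom Ltil hLtil v β β' hβpos hβderiv hβ'cont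
    hβlim hβint hflow t₀ ht₀ hsep ρ γ hρ hγ
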